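/- arXiv:1907.06748 — 4 statements merged into one kernel-verified Lean document; each statement's English description precedes it below -/
import Mathlib

section
/- Let $\mu$ be a measure on a measurable space $S$, and let $h, g : S \to [0,\infty)$ be measurable with $h \le g$ pointwise, $0 < Z_g = \int g \, d\mu < \infty$ and $0 < Z_h = \int h \, d\mu < \infty$. Let $X$ have unnormalized density $g$ with respect to $\mu$, let $U$ be uniform on $[0,1]$, and let $Y$ have unnormalized density $h$ with respect to $\mu$, with $X$, $U$, $Y$ mutually independent (with the convention $h(x)/g(x) := 0$ when $g(x) = 0$). Define $W = X$ if $U \le h(X)/g(X)$ and $W = Y$ otherwise. Then $W$ has unnormalized density $h$ with respect to $\mu$, i.e., for every measurable $A$, $\mathbb{P}(W \in A) = (\int_A h \, d\mu)/Z_h$. -/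
/-!
Conditioning on `X = x`, the proposal is accepted with probability `h x / g x`, so
`P(accept, X ∈ A) = ∫_A (h / g) · g dμ / Z_g = ∫_A h dμ / Z_g`; in particular `P(accept) = Z_h / Z_g`.
On rejection `W = Y`, and `Y` is independent of the rejection event, hence
`P(W ∈ A) = ∫_A h / Z_g + (1 - Z_h / Z_g) · ∫_A h / Z_h = ∫_A h / Z_h`.
-/

open MeasureTheory ProbabilityTheory Set

section

variable {S T Ω : Type*} [MeasurableSpace S] [MeasurableSpace T] [MeasurableSpace Ω]

lemma ofReal_div_add_one_sub_mul_ofReal_div {a b c : ℝ} (ha : 0 ≤ a) (hb : 0 < b) (hbc : b ≤ c) :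
    ENNReal.ofReal (a / c) + (1 - ENNReal.ofReal (b / c)) * ENNReal.ofReal (a / b) =
      ENNReal.ofReal (a / b) := by
  have hc : 0 < c := hb.trans_le hbc
  have hbc_le_one : b / c ≤ 1 := div_le_one_of_le₀ hbc hc.le
  rw [← ENNReal.ofReal_one, ← ENNReal.ofReal_sub _ (by positivity),
    ← ENNReal.ofReal_mul (by linarith), ← ENNReal.ofReal_add (by positivity)
      (mul_nonneg (by linarith) (by positivity))]
  congr 1
  field_simp
  ring

lemma volume_restrict_Icc_zero_one_Iic {c : ℝ} (hc1 : c ≤ 1) :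
    volume.restrict (Icc (0 : ℝ) 1) (Iic c) = ENNReal.ofReal c := by
  have hinter : Iic c ∩ Icc 0 1 = Icc 0 c := by
    ext u
    simp only [mem_inter_iff, mem_Iic, mem_Icc]
    grind
  rw [Measure.restrict_apply measurableSet_Iic, hinter, Real.volume_Icc, sub_zero]

lemma map_eq_smul_withDensity_of_measure_preimage {P : Measure Ω} {X : Ω → S} (hX : Measurable X)
    {μ : Measure S} {g : S → ℝ} (hg0 : ∀ x, 0 ≤ g x) (hgint : Integrable g μ)
    (hZg : 0 < ∫ x, g x ∂μ)
    (hlaw : ∀ A : Set S, MeasurableSet A →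
      P (X ⁻¹' A) = ENNReal.ofReal ((∫ x in A, g x ∂μ) / ∫ x, g x ∂μ)) :
    P.map X = (ENNReal.ofReal (∫ x, g x ∂μ))⁻¹ • μ.withDensity (fun x => ENNReal.ofReal (g x)) := by
  ext A hA
  rw [Measure.map_apply hX hA, hlaw A hA, Measure.smul_apply, withDensity_apply _ hA,
    ← ofReal_integral_eq_lintegral_ofReal hgint.integrableOn (.of_forall hg0),
    ENNReal.ofReal_div_of_pos hZg, smul_eq_mul, ENNReal.div_eq_inv_mul]

lemma setLIntegral_ofReal_div_withDensity {μ : Measure S} {h g : S → ℝ} (hh : Measurable h)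
    (hg : Measurable g) (h0 : ∀ x, 0 ≤ h x) (hle : ∀ x, h x ≤ g x) {B : Set S}
    (hB : MeasurableSet B) :
    ∫⁻ x in B, ENNReal.ofReal (h x / g x) ∂(μ.withDensity fun x => ENNReal.ofReal (g x)) =
      ∫⁻ x in B, ENNReal.ofReal (h x) ∂μ := by
  rw [restrict_withDensity hB, lintegral_withDensity_eq_lintegral_mul _ (by fun_prop)
    (by fun_prop : Measurable fun x => ENNReal.ofReal (h x / g x))]
  congr 1 with x
  rcases (h0 x |>.trans (hle x)).eq_or_lt with hgx | hgx
  · have hhx : h x = 0 := le_antisymm (hgx ▸ hle x) (h0 x)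
    simp [← hgx, hhx]
  · rw [Pi.mul_apply, ← ENNReal.ofReal_mul hgx.le, mul_div_cancel₀ _ hgx.ne']

lemma measure_preimage_le_of_uniform {P : Measure Ω} [IsFiniteMeasure P] {X : Ω → S} {U : Ω → ℝ}
    (hX : Measurable X) (hU : Measurable U) (hUlaw : P.map U = volume.restrict (Icc (0 : ℝ) 1))
    (hXU : IndepFun X U P) {r : S → ℝ} (hr : Measurable r) (hr1 : ∀ x, r x ≤ 1) {B : Set S} (hB : MeasurableSet B) :
    P ((fun ω => (X ω, U ω)) ⁻¹' ({p | p.2 ≤ r p.1} ∩ Prod.fst ⁻¹' B)) =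
      ∫⁻ x in B, ENNReal.ofReal (r x) ∂(P.map X) := by
  have hE : MeasurableSet ({p : S × ℝ | p.2 ≤ r p.1} ∩ Prod.fst ⁻¹' B) :=
    (measurableSet_le measurable_snd (hr.comp measurable_fst)).inter (measurable_fst hB)
  rw [← Measure.map_apply (hX.prodMk hU) hE,
    (indepFun_iff_map_prod_eq_prod_map_map hX.aemeasurable hU.aemeasurable).mp hXU, hUlaw,
    Measure.prod_apply hE, ← lintegral_indicator hB]
  congr 1 with x
  by_cases hxB : x ∈ B
  · have hslice : Prod.mk x ⁻¹' ({p : S × ℝ | p.2 ≤ r p.1} ∩ Prod.fst ⁻¹' B) = Iic (r x) := by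
      ext u; simp [hxB]
    rw [hslice, indicator_of_mem hxB, volume_restrict_Icc_zero_one_Iic (hr1 x)]
  · have hslice : Prod.mk x ⁻¹' ({p : S × ℝ | p.2 ≤ r p.1} ∩ Prod.fst ⁻¹' B) = ∅ := by
      ext u; simp [hxB]
    rw [hslice, indicator_of_notMem hxB, measure_empty]

lemma measure_preimage_ite_of_indepFun {P : Measure Ω} [IsProbabilityMeasure P] {Z : Ω → T}
    {Y W : Ω → S} (hZ : Measurable Z) (hZY : IndepFun Z Y P) {f : T → S} (hf : Measurable f)
    {E : Set T} [DecidablePred (· ∈ E)] (hE : MeasurableSet E)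
    (hW : ∀ ω, W ω = if Z ω ∈ E then f (Z ω) else Y ω) {A : Set S} (hA : MeasurableSet A) :
    P (W ⁻¹' A) = P (Z ⁻¹' (E ∩ f ⁻¹' A)) + (1 - P (Z ⁻¹' E)) * P (Y ⁻¹' A) := by
  have hsplit : W ⁻¹' A = Z ⁻¹' (E ∩ f ⁻¹' A) ∪ (Z ⁻¹' Eᶜ ∩ Y ⁻¹' A) := by
    ext ω
    by_cases hω : Z ω ∈ E <;> simp [hW ω, hω]
  have hdisj : Disjoint (Z ⁻¹' (E ∩ f ⁻¹' A)) (Z ⁻¹' Eᶜ ∩ Y ⁻¹' A) :=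
    disjoint_left.mpr fun _ h₁ h₂ => h₂.1 h₁.1
  rw [hsplit, measure_union' hdisj (hZ (hE.inter (hf hA))),
    hZY.measure_inter_preimage_eq_mul _ _ hE.compl hA, preimage_compl,
    prob_compl_eq_one_sub (hZ hE)]

end

theorem ar_locally_correct_general
    {S : Type*} [MeasurableSpace S] (μ : Measure S)
    (h g : S → ℝ) (hh : Measurable h) (hg : Measurable g)
    (h_nonneg : ∀ x, 0 ≤ h x) (hle : ∀ x, h x ≤ g x)
    (hgint : Integrable g μ) (hhint : Integrable h μ)
    (hZg : 0 < ∫ x, g x ∂μ) (hZh : 0 < ∫ x, h x ∂μ)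
    {Ω : Type*} [MeasurableSpace Ω] (P : Measure Ω) [IsProbabilityMeasure P]
    (X Y : Ω → S) (U : Ω → ℝ)
    (hX : Measurable X) (hU : Measurable U)
    (hXlaw : ∀ A : Set S, MeasurableSet A →
      P (X ⁻¹' A) = ENNReal.ofReal ((∫ x in A, g x ∂μ) / ∫ x, g x ∂μ))
    (hYlaw : ∀ A : Set S, MeasurableSet A →
      P (Y ⁻¹' A) = ENNReal.ofReal ((∫ x in A, h x ∂μ) / ∫ x, h x ∂μ))
    (hUlaw : Measure.map U P = volume.restrict (Set.Icc (0 : ℝ) 1))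
    (hindepXU : IndepFun X U P)
    (hindepXUY : IndepFun (fun ω => (X ω, U ω)) Y P)
    (W : Ω → S)
    (hW : ∀ ω, W ω = if U ω ≤ h (X ω) / g (X ω) then X ω else Y ω) :
    ∀ A : Set S, MeasurableSet A →
      P (W ⁻¹' A) = ENNReal.ofReal ((∫ x in A, h x ∂μ) / ∫ x, h x ∂μ) := by
  intro A hA
  have hg_nonneg : ∀ x, 0 ≤ g x := fun x => (h_nonneg x).trans (hle x)
  have hratio_le_one : ∀ x, h x / g x ≤ 1 := fun x => div_le_one_of_le₀ (hle x) (hg_nonneg x)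
  have haccept : ∀ B : Set S, MeasurableSet B →
      P ((fun ω => (X ω, U ω)) ⁻¹' ({p | p.2 ≤ h p.1 / g p.1} ∩ Prod.fst ⁻¹' B)) =
        ENNReal.ofReal ((∫ x in B, h x ∂μ) / ∫ x, g x ∂μ) := by
    intro B hB
    rw [measure_preimage_le_of_uniform hX hU hUlaw hindepXU (by fun_prop) hratio_le_one hB,
      map_eq_smul_withDensity_of_measure_preimage hX hg_nonneg hgint hZg hXlaw,
      Measure.restrict_smul, lintegral_smul_measure,
      setLIntegral_ofReal_div_withDensity hh hg h_nonneg hle hB,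
      ← ofReal_integral_eq_lintegral_ofReal hhint.integrableOn (.of_forall h_nonneg),
      ENNReal.ofReal_div_of_pos hZg, smul_eq_mul, ENNReal.div_eq_inv_mul]
  rw [measure_preimage_ite_of_indepFun (hX.prodMk hU) hindepXUY measurable_fst
      (E := {p | p.2 ≤ h p.1 / g p.1}) (measurableSet_le measurable_snd (by fun_prop)) hW hA,
    haccept A hA, hYlaw A hA]
  have haccept_univ := haccept univ .univ
  simp only [preimage_univ, inter_univ, setIntegral_univ] at haccept_univ
  rw [haccept_univ]
  exact ofReal_div_add_one_sub_mul_ofReal_div (setIntegral_nonneg hA fun x _ => h_nonneg x) hZh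
    (integral_mono hhint hgint hle)

/-- Local correctness of acceptance/rejection: if `X` has unnormalized density `g`,
`U` is uniform on `[0,1]`, `Y` has unnormalized density `h`, with `X`, `U`, `Y`
mutually independent (encoded as `X ⊥ U` and `(X, U) ⊥ Y`), and
`W = X` if `U ≤ h(X)/g(X)` and `W = Y` otherwise, then `W` has unnormalized
density `h` w.r.t. `μ` (with `h(x)/g(x) := 0` when `g(x) = 0`, which is Lean's
convention since `h x = 0` whenever `g x = 0`). -/
theorem ar_locally_correct
    {S : Type*} [MeasurableSpace S] (μ : Measure S)
    (h g : S → ℝ) (hh : Measurable h) (hg : Measurable g)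
    (h_nonneg : ∀ x, 0 ≤ h x) (hle : ∀ x, h x ≤ g x)
    (hgint : Integrable g μ) (hhint : Integrable h μ)
    (hZg : 0 < ∫ x, g x ∂μ) (hZh : 0 < ∫ x, h x ∂μ)
    {Ω : Type*} [MeasurableSpace Ω] (P : Measure Ω) [IsProbabilityMeasure P]
    (X Y : Ω → S) (U : Ω → ℝ)
    (hX : Measurable X) (hY : Measurable Y) (hU : Measurable U)
    (hXlaw : ∀ A : Set S, MeasurableSet A →
      P (X ⁻¹' A) = ENNReal.ofReal ((∫ x in A, g x ∂μ) / ∫ x, g x ∂μ))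
    (hYlaw : ∀ A : Set S, MeasurableSet A →
      P (Y ⁻¹' A) = ENNReal.ofReal ((∫ x in A, h x ∂μ) / ∫ x, h x ∂μ))
    (hUlaw : Measure.map U P = volume.restrict (Set.Icc (0 : ℝ) 1))
    (hindepXU : IndepFun X U P)
    (hindepXUY : IndepFun (fun ω => (X ω, U ω)) Y P)
    (W : Ω → S)
    (hW : ∀ ω, W ω = if U ω ≤ h (X ω) / g (X ω) then X ω else Y ω) :
    ∀ A : Set S, MeasurableSet A →
      P (W ⁻¹' A) = ENNReal.ofReal ((∫ x in A, h x ∂μ) / ∫ x, h x ∂μ) :=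
  ar_locally_correct_general μ h g hh hg h_nonneg hle hgint hhint hZg hZh P X Y U hX hU hXlaw hYlaw
    hUlaw hindepXU hindepXUY W hW
end

section
/- Let $(\Omega, \mathcal{F})$ and $(\mathcal{R}, \mathcal{G})$ be measurable spaces, $\pi$ a probability measure on $\Omega$, $P$ a probability measure on $\mathcal{R}$, and $\phi : \Omega \times \mathcal{R} \to \Omega$ a measurable function that is a stationary update function with respect to $\pi$: whenever $X \sim \pi$ and $R \sim P$ are independent, $\phi(X, R) \sim \pi$. Let $A \subseteq \mathcal{R}$ be a measurable set such that for all $r \in A$ and all $x_0, x_1 \in \Omega$, $\phi(x_0, r) = \phi(x_1, r)$. Fix any $x \in \Omega$, and let $Y \sim \pi$ and $R \sim P$ be independent. Define $W = \phi(x, R)$ if $R \in A$ and $W = \phi(Y, R)$ otherwise. Then $W \sim \pi$. -/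
open MeasureTheory ProbabilityTheory
open scoped Classical

/-- Local correctness of Coupling from the Past: if `φ` is a stationary update
function with respect to `π` (i.e. `φ` applied to an independent pair
`X ∼ π`, `R ∼ P` yields a draw from `π`), `A` is a set of random choices on
which complete coupling occurs, `x` is any fixed state, `Y ∼ π` and `R ∼ P`
are independent, and `W = φ(x, R)` if `R ∈ A` and `W = φ(Y, R)` otherwise,
then `W ∼ π`. -/
theorem cftp_locally_correct
    {Ω' : Type*} [MeasurableSpace Ω'] {R' : Type*} [MeasurableSpace R']
    (π : Measure Ω') [IsProbabilityMeasure π]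
    (P : Measure R') [IsProbabilityMeasure P]
    (φ : Ω' × R' → Ω') (hφ : Measurable φ)
    (hstat : Measure.map φ (π.prod P) = π)
    (A : Set R') (hA : MeasurableSet A)
    (hcouple : ∀ r ∈ A, ∀ x₀ x₁ : Ω', φ (x₀, r) = φ (x₁, r))
    (x : Ω')
    {Ω : Type*} [MeasurableSpace Ω] (ℙ' : Measure Ω) [IsProbabilityMeasure ℙ']
    (Y : Ω → Ω') (Rv : Ω → R') (hY : Measurable Y) (hRv : Measurable Rv)
    (hYlaw : Measure.map Y ℙ' = π) (hRlaw : Measure.map Rv ℙ' = P)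
    (hindep : IndepFun Y Rv ℙ')
    (W : Ω → Ω')
    (hW : ∀ ω, W ω = if Rv ω ∈ A then φ (x, Rv ω) else φ (Y ω, Rv ω)) :
    Measure.map W ℙ' = π := by
  have hWeq : W = fun ω => φ (Y ω, Rv ω) := by
    funext ω
    rw [hW ω]
    split_ifs with h
    · exact hcouple _ h x (Y ω)
    · rfl
  have hjoint : Measure.map (fun ω => (Y ω, Rv ω)) ℙ' = π.prod P := by
    rw [← hYlaw, ← hRlaw]
    exact (indepFun_iff_map_prod_eq_prod_map_map hY.aemeasurable hRv.aemeasurable).mp hindep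
  rw [hWeq, ← hstat, ← hjoint,
    Measure.map_map hφ (hY.prodMk hRv)]
  rfl
end

section
/- Let $C > 0$ and $p \in [0,1]$. Let $B$, $X$, $Y$ be mutually independent $\{0,1\}$-valued random variables with $\mathbb{P}(B = 1) = C/(1+C)$, $\mathbb{P}(X = 1) = p$, and $\mathbb{P}(Y = 1) = Cp/(1+Cp)$. Define $W = B \cdot (X + (1 - X) Y)$, i.e., $W = 1$ exactly when $B = 1$ and either $X = 1$ or ($X = 0$ and $Y = 1$). Then $\mathbb{P}(W = 1) = Cp/(1+Cp)$. -/
open MeasureTheory ProbabilityTheory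

/-- Local correctness of the Bernoulli factory BF1 for `f(p) = Cp/(1+Cp)`:
if `B ∼ Bern(C/(1+C))`, `X ∼ Bern(p)`, `Y ∼ Bern(Cp/(1+Cp))` are mutually
independent (encoded as `B ⊥ X` and `(B, X) ⊥ Y`) `{0,1}`-valued random
variables and `W = B(X + (1-X)Y)`, then `ℙ(W = 1) = Cp/(1+Cp)`. -/
theorem bf1_locally_correct
    (C p : ℝ) (hC : 0 < C) (hp0 : 0 ≤ p) (hp1 : p ≤ 1)
    {Ω : Type*} [MeasurableSpace Ω] (P : Measure Ω) [IsProbabilityMeasure P]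
    (B X Y : Ω → ℝ)
    (hB : Measurable B) (hX : Measurable X) (hY : Measurable Y)
    (hBval : ∀ ω, B ω = 0 ∨ B ω = 1)
    (hXval : ∀ ω, X ω = 0 ∨ X ω = 1)
    (hYval : ∀ ω, Y ω = 0 ∨ Y ω = 1)
    (hBlaw : P {ω | B ω = 1} = ENNReal.ofReal (C / (1 + C)))
    (hXlaw : P {ω | X ω = 1} = ENNReal.ofReal p)
    (hYlaw : P {ω | Y ω = 1} = ENNReal.ofReal (C * p / (1 + C * p)))
    (hindepBX : IndepFun B X P)
    (hindepBXY : IndepFun (fun ω => (B ω, X ω)) Y P)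
    (W : Ω → ℝ) (hW : ∀ ω, W ω = B ω * (X ω + (1 - X ω) * Y ω)) :
    P {ω | W ω = 1} = ENNReal.ofReal (C * p / (1 + C * p)) := by
  have h1C : (0:ℝ) < 1 + C := by linarith
  have h1Cp : (0:ℝ) < 1 + C * p := by nlinarith
  have hsets : {ω | W ω = 1} =
      (B ⁻¹' {1} ∩ X ⁻¹' {1}) ∪
        ((fun ω => (B ω, X ω)) ⁻¹' {((1:ℝ), (0:ℝ))} ∩ Y ⁻¹' {1}) := by
    ext ω
    simp only [Set.mem_setOf_eq, Set.mem_union, Set.mem_inter_iff, Set.mem_preimage,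
      Set.mem_singleton_iff, Prod.mk.injEq, hW]
    rcases hBval ω with hb | hb <;> rcases hXval ω with hx | hx <;>
      rcases hYval ω with hy | hy <;> simp [hb, hx, hy]
  have hdisj : Disjoint (B ⁻¹' {1} ∩ X ⁻¹' {1})
      ((fun ω => (B ω, X ω)) ⁻¹' {((1:ℝ), (0:ℝ))} ∩ Y ⁻¹' {1}) := by
    rw [Set.disjoint_left]
    rintro ω ⟨-, h1⟩ ⟨h2, -⟩
    simp only [Set.mem_preimage, Set.mem_singleton_iff, Prod.mk.injEq] at h1 h2
    rw [h1] at h2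
    norm_num at h2
  have hX0 : P (X ⁻¹' {0}) = ENNReal.ofReal (1 - p) := by
    have : X ⁻¹' {0} = (X ⁻¹' {1})ᶜ := by
      ext ω
      rcases hXval ω with hx | hx <;> simp [hx]
    rw [this, measure_compl (hX (measurableSet_singleton 1)) (measure_ne_top P _)]
    have h1 : P (X ⁻¹' {1}) = ENNReal.ofReal p := hXlaw
    rw [h1, measure_univ, ← ENNReal.ofReal_one, ← ENNReal.ofReal_sub _ hp0]
  have hpair : P ((fun ω => (B ω, X ω)) ⁻¹' {((1:ℝ), (0:ℝ))}) =
      ENNReal.ofReal (C / (1 + C)) * ENNReal.ofReal (1 - p) := by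
    have heq : (fun ω => (B ω, X ω)) ⁻¹' {((1:ℝ), (0:ℝ))} = B ⁻¹' {1} ∩ X ⁻¹' {0} := by
      ext ω; simp [Prod.ext_iff]
    rw [heq, hindepBX.measure_inter_preimage_eq_mul _ _ (measurableSet_singleton 1)
      (measurableSet_singleton 0), hX0]
    have hBlaw' : P (B ⁻¹' {1}) = ENNReal.ofReal (C / (1 + C)) := hBlaw
    rw [hBlaw']
  rw [hsets, measure_union hdisj
      (((hB.prodMk hX) (measurableSet_singleton _)).inter (hY (measurableSet_singleton 1))),
    hindepBX.measure_inter_preimage_eq_mul _ _ (measurableSet_singleton 1)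
      (measurableSet_singleton 1),
    hindepBXY.measure_inter_preimage_eq_mul _ _ (measurableSet_singleton _)
      (measurableSet_singleton 1), hpair]
  have hBlaw' : P (B ⁻¹' {1}) = ENNReal.ofReal (C / (1 + C)) := hBlaw
  have hXlaw' : P (X ⁻¹' {1}) = ENNReal.ofReal p := hXlaw
  have hYlaw' : P (Y ⁻¹' {1}) = ENNReal.ofReal (C * p / (1 + C * p)) := hYlaw
  rw [hBlaw', hXlaw', hYlaw']
  rw [← ENNReal.ofReal_mul (by positivity),
    ← ENNReal.ofReal_mul (by positivity),
    ← ENNReal.ofReal_mul (mul_nonneg (by positivity) (by linarith)),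
    ← ENNReal.ofReal_add (by positivity)
      (mul_nonneg (mul_nonneg (by positivity) (by linarith)) (by positivity))]
  congr 1
  field_simp
  ring
end

section
/- Let $C > 0$ and $p \in (0, 1]$. Let $(B_k, X_k)_{k \ge 1}$ be an iid sequence where in each pair $B_k$ and $X_k$ are independent $\{0,1\}$-valued random variables with $\mathbb{P}(B_k = 1) = C/(1+C)$ and $\mathbb{P}(X_k = 1) = p$. Let $N = \inf\{k \ge 1 : B_k = 0 \text{ or } X_k = 1\}$ (the round at which the algorithm BF1 halts), and let $T = \sum_{k=1}^{N} B_k$ (the number of $\mathrm{Bern}(p)$ coin flips used, since a coin is flipped in round $k$ exactly when $B_k = 1$). Then $\mathbb{E}[T] = C/(1 + Cp)$. -/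
open MeasureTheory ProbabilityTheory

/-- Expected number of `Bern(p)` coin flips used by the Bernoulli factory BF1:
with iid rounds `(Bₖ, Xₖ)` where `Bₖ ∼ Bern(C/(1+C))` and `Xₖ ∼ Bern(p)` are
independent, `N` the first round `k ≥ 1` with `Bₖ = 0` or `Xₖ = 1`, and
`T = ∑_{k=1}^N Bₖ` the number of coin flips, `E[T] = C/(1 + Cp)`. -/
theorem bf1_expected_flips
    (C p : ℝ) (hC : 0 < C) (hp0 : 0 < p) (hp1 : p ≤ 1)
    {Ω : Type*} [MeasurableSpace Ω] (P : Measure Ω) [IsProbabilityMeasure P]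
    (B X : ℕ → Ω → ℝ)
    (hB : ∀ k, Measurable (B k)) (hX : ∀ k, Measurable (X k))
    (hBval : ∀ k ω, B k ω = 0 ∨ B k ω = 1)
    (hXval : ∀ k ω, X k ω = 0 ∨ X k ω = 1)
    (hiid : iIndepFun (fun k ω => (B k ω, X k ω)) P)
    (hpair : ∀ k, IndepFun (B k) (X k) P)
    (hBlaw : ∀ k, P {ω | B k ω = 1} = ENNReal.ofReal (C / (1 + C)))
    (hXlaw : ∀ k, P {ω | X k ω = 1} = ENNReal.ofReal p)
    (N : Ω → ℕ)
    (hN : ∀ ω, N ω = sInf {k | 1 ≤ k ∧ (B k ω = 0 ∨ X k ω = 1)})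
    (T : Ω → ℝ) (hT : ∀ ω, T ω = ∑ k ∈ Finset.Icc 1 (N ω), B k ω) :
    ∫ ω, T ω ∂P = C / (1 + C * p) := by
  classical
  set q : ℝ := C / (1 + C) with hq_def
  set r : ℝ := q * (1 - p) with hr_def
  have h1C : (0:ℝ) < 1 + C := by linarith
  have hq0 : 0 ≤ q := div_nonneg hC.le h1C.le
  have hq1 : q < 1 := by
    rw [hq_def, div_lt_one h1C]; linarith
  have hr0 : 0 ≤ r := mul_nonneg hq0 (by linarith)
  have hr1 : r < 1 :=
    lt_of_le_of_lt (by nlinarith : r ≤ q) hq1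
  have h1Cp : (0:ℝ) < 1 + C * p := by nlinarith
  -- the "continue" event at round j
  set Y : ℕ → Ω → ℝ × ℝ := fun k ω => (B k ω, X k ω) with hY_def
  set A : ℕ → Set Ω := fun j => Y j ⁻¹' (({1} : Set ℝ) ×ˢ ({0} : Set ℝ)) with hA_def
  have hA_mem : ∀ j ω, ω ∈ A j ↔ (B j ω = 1 ∧ X j ω = 0) := by
    intro j ω; simp [hA_def, hY_def, Set.mem_prod]
  have hY_meas : ∀ j, Measurable (Y j) := fun j => (hB j).prodMk (hX j)
  have hA_meas : ∀ j, MeasurableSet (A j) := fun j =>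
    (hY_meas j) (((measurableSet_singleton 1).prod (measurableSet_singleton 0)))
  have hBset : ∀ j, (B j) ⁻¹' ({1} : Set ℝ) = {ω | B j ω = 1} := fun j => rfl
  -- probability of X = 0
  have hXzero : ∀ j, P ((X j) ⁻¹' ({0} : Set ℝ)) = ENNReal.ofReal (1 - p) := by
    intro j
    have hset : (X j) ⁻¹' ({0} : Set ℝ) = ((X j) ⁻¹' ({1} : Set ℝ))ᶜ := by
      ext ω
      rcases hXval j ω with h | h <;> simp [h]
    have hx1 : P ((X j) ⁻¹' ({1} : Set ℝ)) = ENNReal.ofReal p := hXlaw j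
    rw [hset, prob_compl_eq_one_sub ((hX j) (measurableSet_singleton 1)), hx1,
      ← ENNReal.ofReal_one, ← ENNReal.ofReal_sub _ hp0.le]
  -- probability of a continue round
  have hA_prob : ∀ j, P (A j) = ENNReal.ofReal r := by
    intro j
    have h := (hpair j).measure_inter_preimage_eq_mul (s := ({1} : Set ℝ))
      (t := ({0} : Set ℝ)) (measurableSet_singleton 1) (measurableSet_singleton 0)
    have hAset : A j = (B j) ⁻¹' ({1} : Set ℝ) ∩ (X j) ⁻¹' ({0} : Set ℝ) := by
      ext ω; simp [hA_mem j ω]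
    rw [hAset, h, hBset, hBlaw j, hXzero j, ← ENNReal.ofReal_mul hq0]
  -- probability of continuing through rounds 1..k
  have hC_prob : ∀ k : ℕ, P (⋂ j ∈ Finset.Icc 1 k, A j) = (ENNReal.ofReal r) ^ k := by
    intro k
    have h := hiid.measure_inter_preimage_eq_mul (Finset.Icc 1 k)
      (sets := fun _ => (({1} : Set ℝ) ×ˢ ({0} : Set ℝ)))
      (fun i _ => (measurableSet_singleton 1).prod (measurableSet_singleton 0))
    have : (⋂ j ∈ Finset.Icc 1 k, A j)
        = ⋂ j ∈ Finset.Icc 1 k, Y j ⁻¹' (({1} : Set ℝ) ×ˢ ({0} : Set ℝ)) := rfl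
    rw [this, h]
    have : ∀ j ∈ Finset.Icc 1 k,
        P (Y j ⁻¹' (({1} : Set ℝ) ×ˢ ({0} : Set ℝ))) = ENNReal.ofReal r := fun j _ => hA_prob j
    rw [Finset.prod_congr rfl this, Finset.prod_const, Nat.card_Icc]
    norm_num
  -- the event that the algorithm flips a coin at round n (n ≥ 1)
  set E : ℕ → Set Ω := fun n => {ω | B n ω = 1} ∩ ⋂ j ∈ Finset.Icc 1 (n - 1), A j with hE_def
  have hE_meas : ∀ n, MeasurableSet (E n) := by
    intro n
    exact ((hB n) (measurableSet_singleton 1)).inter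
      (Finset.measurableSet_biInter _ fun j _ => hA_meas j)
  have hE_prob : ∀ k : ℕ, P (E (k + 1)) = ENNReal.ofReal q * (ENNReal.ofReal r) ^ k := by
    intro k
    set sets : ℕ → Set (ℝ × ℝ) := fun j =>
      if j = k + 1 then (Prod.fst ⁻¹' ({1} : Set ℝ)) else (({1} : Set ℝ) ×ˢ ({0} : Set ℝ))
      with hsets_def
    have hsets_meas : ∀ i, i ∈ Finset.Icc 1 (k + 1) → MeasurableSet (sets i) := by
      intro i _
      by_cases hi : i = k + 1
      · simp only [hsets_def, hi, if_pos]
        exact measurable_fst (measurableSet_singleton 1)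
      · simp only [hsets_def, hi, if_neg, ite_false]
        exact (measurableSet_singleton 1).prod (measurableSet_singleton 0)
    have h := hiid.measure_inter_preimage_eq_mul (Finset.Icc 1 (k + 1))
      (sets := sets) hsets_meas
    have hins : Finset.Icc 1 (k + 1) = insert (k + 1) (Finset.Icc 1 k) := by
      ext j; simp [Finset.mem_Icc, Finset.mem_insert]; omega
    have hnotmem : (k + 1) ∉ Finset.Icc 1 k := by simp
    have hEeq : E (k + 1) = ⋂ j ∈ Finset.Icc 1 (k + 1), Y j ⁻¹' sets j := by
      rw [hins, Finset.set_biInter_insert]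
      have h1 : Y (k + 1) ⁻¹' sets (k + 1) = {ω | B (k + 1) ω = 1} := by
        simp [hsets_def, hY_def]; rfl
      have h2 : (⋂ j ∈ Finset.Icc 1 k, Y j ⁻¹' sets j)
          = ⋂ j ∈ Finset.Icc 1 k, A j := by
        apply Set.iInter₂_congr
        intro j hj
        have : j ≠ k + 1 := by
          intro hjeq; exact hnotmem (hjeq ▸ hj)
        simp [hsets_def, this, hA_def]
      rw [h1, h2, hE_def]
      simp
    rw [hEeq, h, hins, Finset.prod_insert hnotmem]
    have h1 : P (Y (k + 1) ⁻¹' sets (k + 1)) = ENNReal.ofReal q := by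
      have : Y (k + 1) ⁻¹' sets (k + 1) = {ω | B (k + 1) ω = 1} := by
        simp [hsets_def, hY_def]; rfl
      rw [this, hBlaw]
    have h2 : ∀ j ∈ Finset.Icc 1 k, P (Y j ⁻¹' sets j) = ENNReal.ofReal r := by
      intro j hj
      have hne : j ≠ k + 1 := fun hjeq => hnotmem (hjeq ▸ hj)
      have : Y j ⁻¹' sets j = A j := by simp [hsets_def, hne, hA_def]
      rw [this, hA_prob]
    rw [h1, Finset.prod_congr rfl h2, Finset.prod_const, Nat.card_Icc]
    norm_num
  -- the bad event: continuing forever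
  set Bad : Set Ω := ⋂ n : ℕ, A (n + 1) with hBad_def
  have hBad0 : P Bad = 0 := by
    have hle : ∀ k : ℕ, P Bad ≤ (ENNReal.ofReal r) ^ k := by
      intro k
      calc P Bad ≤ P (⋂ j ∈ Finset.Icc 1 k, A j) := by
            apply measure_mono
            intro ω hω
            simp only [Set.mem_iInter]
            intro j hj
            simp only [Finset.mem_Icc] at hj
            have : j = (j - 1) + 1 := by omega
            rw [this]
            exact Set.mem_iInter.mp hω (j - 1)
        _ = (ENNReal.ofReal r) ^ k := hC_prob k
    have htend : Filter.Tendsto (fun k : ℕ => (ENNReal.ofReal r) ^ k)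
        Filter.atTop (nhds 0) :=
      ENNReal.tendsto_pow_atTop_nhds_zero_of_lt_one (ENNReal.ofReal_lt_one.mpr hr1)
    exact le_antisymm (ge_of_tendsto' htend hle) (by positivity)
  -- T is nonnegative
  have hT_nonneg : ∀ ω, 0 ≤ T ω := by
    intro ω
    rw [hT ω]
    apply Finset.sum_nonneg
    intro k _
    rcases hBval k ω with h | h <;> simp [h]
  -- the auxiliary ENNReal-valued function
  set G : Ω → ENNReal := fun ω =>
    ∑' k : ℕ, Set.indicator (E (k + 1)) (fun _ => (1 : ENNReal)) ω with hG_def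
  have hG_meas : Measurable G :=
    Measurable.ennreal_tsum fun k => measurable_one.indicator (hE_meas (k + 1))
  -- pointwise identity off the bad set
  have hpt : ∀ ω, ω ∉ Bad → G ω = ENNReal.ofReal (T ω) := by
    intro ω hω
    -- the stopping set is nonempty
    obtain ⟨m, hm⟩ : ∃ m : ℕ, ω ∉ A (m + 1) := by
      by_contra h
      push_neg at h
      exact hω (Set.mem_iInter.mpr h)
    have hmem : (m + 1) ∈ {k : ℕ | 1 ≤ k ∧ (B k ω = 0 ∨ X k ω = 1)} := by
      refine ⟨by omega, ?_⟩
      rw [hA_mem] at hm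
      rcases hBval (m + 1) ω with h | h
      · exact Or.inl h
      · rcases hXval (m + 1) ω with h' | h'
        · exact absurd ⟨h, h'⟩ hm
        · exact Or.inr h'
    set n : ℕ := N ω with hn_def
    have hn_mem : n ∈ {k : ℕ | 1 ≤ k ∧ (B k ω = 0 ∨ X k ω = 1)} := by
      rw [hn_def, hN ω]
      exact Nat.sInf_mem ⟨m + 1, hmem⟩
    have hn1 : 1 ≤ n := hn_mem.1
    have hstop : B n ω = 0 ∨ X n ω = 1 := hn_mem.2
    have hlt : ∀ j, 1 ≤ j → j < n → (B j ω = 1 ∧ X j ω = 0) := by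
      intro j hj1 hjn
      have hjn' : j < sInf {k : ℕ | 1 ≤ k ∧ (B k ω = 0 ∨ X k ω = 1)} := by
        rwa [← hN ω, ← hn_def]
      have : j ∉ {k : ℕ | 1 ≤ k ∧ (B k ω = 0 ∨ X k ω = 1)} :=
        Nat.notMem_of_lt_sInf hjn'
      simp only [Set.mem_setOf_eq, not_and, not_or] at this
      obtain ⟨hb, hx⟩ := this hj1
      constructor
      · rcases hBval j ω with h | h
        · exact absurd h hb
        · exact h
      · rcases hXval j ω with h | h
        · exact h
        · exact absurd h hx
    have hind : ∀ k : ℕ, Set.indicator (E (k + 1)) (fun _ => (1 : ENNReal)) ω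
        = if k + 1 ≤ n then ENNReal.ofReal (B (k + 1) ω) else 0 := by
      intro k
      by_cases hk : k + 1 ≤ n
      · rw [if_pos hk]
        have hcont : ω ∈ ⋂ j ∈ Finset.Icc 1 (k + 1 - 1), A j := by
          simp only [Set.mem_iInter]
          intro j hj
          simp only [Finset.mem_Icc] at hj
          have hjn : j < n := by omega
          exact (hA_mem j ω).mpr (hlt j hj.1 hjn)
        rcases hBval (k + 1) ω with h | h
        · have : ω ∉ E (k + 1) := by
            intro hmem'
            have := hmem'.1
            simp only [Set.mem_setOf_eq] at this
            rw [h] at this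
            norm_num at this
          rw [Set.indicator_of_notMem this, h]
          simp
        · have : ω ∈ E (k + 1) := ⟨by simpa [Set.mem_setOf_eq] using h, hcont⟩
          rw [Set.indicator_of_mem this, h]
          simp
      · rw [if_neg hk]
        apply Set.indicator_of_notMem
        intro hmem'
        have hnIcc : n ∈ Finset.Icc 1 (k + 1 - 1) := by
          simp only [Finset.mem_Icc]
          omega
        have hAn : ω ∈ A n := Set.mem_iInter.mp (Set.mem_iInter.mp hmem'.2 n) hnIcc
        rw [hA_mem] at hAn
        rcases hstop with h | h
        · rw [hAn.1] at h; norm_num at h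
        · rw [hAn.2] at h; norm_num at h
    have hsum : G ω = ∑ k ∈ Finset.range n, ENNReal.ofReal (B (k + 1) ω) := by
      rw [hG_def]
      simp only
      rw [tsum_eq_sum (s := Finset.range n)]
      · apply Finset.sum_congr rfl
        intro k hk
        simp only [Finset.mem_range] at hk
        rw [hind k, if_pos (by omega)]
      · intro k hk
        simp only [Finset.mem_range, not_lt] at hk
        rw [hind k, if_neg (by omega)]
    rw [hsum, hT ω, ← hn_def]
    rw [← ENNReal.ofReal_sum_of_nonneg]
    · congr 1
      have : Finset.Icc 1 n = Finset.Ico 1 (n + 1) := by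
        ext j; simp [Nat.lt_succ_iff]
      rw [this, Finset.sum_Ico_eq_sum_range]
      simp only [Nat.add_sub_cancel]
      apply Finset.sum_congr rfl
      intro k _
      rw [add_comm]
    · intro k _
      rcases hBval (k + 1) ω with h | h <;> simp [h]
  -- almost everywhere, ω is not in Bad
  have hae : ∀ᵐ ω ∂P, ω ∉ Bad := by
    rw [ae_iff]
    simpa [not_not] using hBad0
  -- T equals toReal ∘ G almost everywhere
  have hTG : T =ᵐ[P] fun ω => (G ω).toReal := by
    filter_upwards [hae] with ω hω
    rw [hpt ω hω, ENNReal.toReal_ofReal (hT_nonneg ω)]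
  -- G is a.e. finite
  have hG_fin : ∀ᵐ ω ∂P, G ω < ⊤ := by
    filter_upwards [hae] with ω hω
    rw [hpt ω hω]
    exact ENNReal.ofReal_lt_top
  -- compute the integral
  have hint : ∫ ω, T ω ∂P = (∫⁻ ω, G ω ∂P).toReal := by
    rw [integral_congr_ae hTG]
    exact integral_toReal hG_meas.aemeasurable hG_fin
  have hlint : ∫⁻ ω, G ω ∂P = ENNReal.ofReal q * (1 - ENNReal.ofReal r)⁻¹ := by
    have hswap : ∫⁻ ω, G ω ∂P
        = ∑' k : ℕ, ∫⁻ ω, Set.indicator (E (k + 1)) (fun _ => (1 : ENNReal)) ω ∂P := by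
      simp only [hG_def]
      exact lintegral_tsum fun k => (measurable_one.indicator (hE_meas (k + 1))).aemeasurable
    rw [hswap]
    have : ∀ k : ℕ, ∫⁻ ω, Set.indicator (E (k + 1)) (fun _ => (1 : ENNReal)) ω ∂P
        = ENNReal.ofReal q * (ENNReal.ofReal r) ^ k := by
      intro k
      exact (lintegral_indicator_one (hE_meas (k + 1))).trans (hE_prob k)
    rw [tsum_congr this, ENNReal.tsum_mul_left, ENNReal.tsum_geometric]
  rw [hint, hlint]
  have h1r : (1 : ENNReal) - ENNReal.ofReal r = ENNReal.ofReal (1 - r) := by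
    rw [ENNReal.ofReal_sub _ hr0, ENNReal.ofReal_one]
  have h1r_pos : (0:ℝ) < 1 - r := by linarith
  rw [h1r, ← ENNReal.ofReal_inv_of_pos h1r_pos, ← ENNReal.ofReal_mul hq0,
    ENNReal.toReal_ofReal (mul_nonneg hq0 (inv_nonneg.mpr h1r_pos.le))]
  -- final arithmetic
  have h1C' : (1 : ℝ) + C ≠ 0 := ne_of_gt h1C
  have h1Cp' : (1 : ℝ) + C * p ≠ 0 := ne_of_gt h1Cp
  rw [hr_def, hq_def]
  field_simp
  linear_combination inv_mul_cancel₀ h1Cp'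
end
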